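/- arXiv:2207.04342 — 4 statements merged into one kernel-verified Lean document; each statement's English description precedes it below -/
import Mathlib

section
/- Assume 0 ≤ g(T) ≤ M for all T ⊆ B. Then for every subset S ⊆ V: if S_A ≠ R then F(S) ≥ 1/2, while if S_A = R then F(S) ≤ 1/(4n) ≤ 1/4. -/
open Finset

variable {α : Type*}

/-- The function `f_{A,R}`: 0 on `R`, 1 on strict subsets/supersets of `R`, 2 otherwise. -/
noncomputable def fAR [DecidableEq α] (R T : Finset α) : ℝ :=
  if T = R then 0 else if T ⊂ R ∨ R ⊂ T then 1 else 2

/-- The submodularizer `φ` on subsets of `V`, where `B = V \ A`: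
`φ(S) = |S ∩ B|` if `S ∩ A ⊊ R`, `-|S ∩ B|` if `S ∩ A ⊋ R`, and `0` otherwise. -/
noncomputable def phi [DecidableEq α] (A R B S : Finset α) : ℝ :=
  if S ∩ A ⊂ R then ((S ∩ B).card : ℝ)
  else if R ⊂ S ∩ A then -((S ∩ B).card : ℝ)
  else 0

/-- The main building block
`F(S) = f_{A,R}(S ∩ A) + (1/(2n)) φ(S) + (1/(4Mn)) ⋅ 1[S ∩ A = R] ⋅ g(S ∩ B)`. -/
noncomputable def Fbb [DecidableEq α] (n : ℕ) (A R B : Finset α) (M : ℝ)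
    (g : Finset α → ℝ) (S : Finset α) : ℝ :=
  fAR R (S ∩ A) + (1 / (2 * (n : ℝ))) * phi A R B S
    + (1 / (4 * M * (n : ℝ))) * (if S ∩ A = R then (1 : ℝ) else 0) * g (S ∩ B)

/-! Off `R` the value of `f_{A,R}` is at least `1`, and the `φ`-term costs at most
`|S_B| / (2n) ≤ 1/2`. On `R` both `f_{A,R}` and `φ` vanish, leaving only the `g`-term,
which is at most `M / (4Mn)`. -/

section Fbb

variable [DecidableEq α] {A R B S T : Finset α}

lemma one_le_fAR (h : T ≠ R) : 1 ≤ fAR R T := by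
  rw [fAR, if_neg h]
  split_ifs <;> norm_num

lemma neg_card_le_phi : -((S ∩ B).card : ℝ) ≤ phi A R B S := by
  unfold phi
  split_ifs <;> simp

lemma phi_of_inter_eq (h : S ∩ A = R) : phi A R B S = 0 := by
  simp [phi, h]

lemma Fbb_of_inter_ne (n : ℕ) (M : ℝ) (g : Finset α → ℝ) (h : S ∩ A ≠ R) :
    Fbb n A R B M g S = fAR R (S ∩ A) + 1 / (2 * n) * phi A R B S := by
  simp [Fbb, h]

lemma Fbb_of_inter_eq (n : ℕ) (M : ℝ) (g : Finset α → ℝ) (h : S ∩ A = R) :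
    Fbb n A R B M g S = g (S ∩ B) / (4 * M * n) := by
  simp [Fbb, fAR, phi_of_inter_eq h, h, div_eq_inv_mul]

lemma one_half_le_Fbb {n : ℕ} (M : ℝ) (g : Finset α → ℝ) (hS : (S ∩ B).card ≤ n)
    (h : S ∩ A ≠ R) : 1 / 2 ≤ Fbb n A R B M g S := by
  have hcard : 1 / (2 * n) * ((S ∩ B).card : ℝ) ≤ 1 / 2 :=
    calc 1 / (2 * n) * ((S ∩ B).card : ℝ)
        ≤ 1 / (2 * n) * n := by gcongr
      _ = (n / n : ℝ) / 2 := by ring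
      _ ≤ 1 / 2 := by gcongr; exact div_self_le_one (n : ℝ)
  have hphi : -(1 / (2 * n) * ((S ∩ B).card : ℝ)) ≤ 1 / (2 * n) * phi A R B S := by
    rw [← mul_neg]
    exact mul_le_mul_of_nonneg_left neg_card_le_phi (by positivity)
  rw [Fbb_of_inter_ne n M g h]
  linarith [one_le_fAR h]

lemma Fbb_le_of_inter_eq {M : ℝ} (hM : 0 ≤ M) (n : ℕ) {g : Finset α → ℝ}
    (hg : g (S ∩ B) ≤ M) (h : S ∩ A = R) : Fbb n A R B M g S ≤ 1 / (4 * n) := by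
  rw [Fbb_of_inter_eq n M g h]
  calc g (S ∩ B) / (4 * M * n)
      ≤ M / (4 * M * n) := by gcongr
    _ = M / M * (1 / (4 * n)) := by ring
    _ ≤ 1 / (4 * n) := mul_le_of_le_one_left (by positivity) (div_self_le_one M)

end Fbb

lemma one_div_four_mul_natCast_le (n : ℕ) : 1 / (4 * (n : ℝ)) ≤ 1 / 4 := by
  calc 1 / (4 * (n : ℝ)) = 1 / 4 * (n : ℝ)⁻¹ := by ring
    _ ≤ 1 / 4 := mul_le_of_le_one_right (by norm_num) (Nat.cast_inv_le_one n)

theorem Fbb_gap_general [DecidableEq α] (V A R : Finset α)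
    (M : ℝ) (hM : 0 < M) (g : Finset α → ℝ)
    (hg : ∀ T ⊆ V \ A, 0 ≤ g T ∧ g T ≤ M) :
    ∀ S ⊆ V,
      (S ∩ A ≠ R → (1 : ℝ) / 2 ≤ Fbb V.card A R (V \ A) M g S) ∧
      (S ∩ A = R → Fbb V.card A R (V \ A) M g S ≤ 1 / (4 * (V.card : ℝ)) ∧
        1 / (4 * (V.card : ℝ)) ≤ (1 : ℝ) / 4) := by
  intro S hS
  refine ⟨one_half_le_Fbb M g (card_le_card (inter_subset_left.trans hS)), fun h => ?_⟩
  exact ⟨Fbb_le_of_inter_eq hM.le _ (hg _ inter_subset_right).2 h,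
    one_div_four_mul_natCast_le _⟩

/-- if `0 ≤ g(T) ≤ M` for all `T ⊆ B`, then for every `S ⊆ V`:
if `S ∩ A ≠ R` then `F(S) ≥ 1/2`, while if `S ∩ A = R` then `F(S) ≤ 1/(4n) ≤ 1/4`. -/
theorem Fbb_gap [DecidableEq α] (V A R : Finset α) (hV : 1 ≤ V.card)
    (hA : A.Nonempty) (hR : R.Nonempty) (hRA : R ⊆ A) (hAV : A ⊆ V)
    (M : ℝ) (hM : 0 < M) (g : Finset α → ℝ)
    (hg : ∀ T ⊆ V \ A, 0 ≤ g T ∧ g T ≤ M) :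
    ∀ S ⊆ V,
      (S ∩ A ≠ R → (1 : ℝ) / 2 ≤ Fbb V.card A R (V \ A) M g S) ∧
      (S ∩ A = R → Fbb V.card A R (V \ A) M g S ≤ 1 / (4 * (V.card : ℝ)) ∧
        1 / (4 * (V.card : ℝ)) ≤ (1 : ℝ) / 4) :=
  Fbb_gap_general V A R M hM g hg
end

section
/- Assume 0 ≤ g(T) ≤ M for all T ⊆ B. Let X, Y ⊆ V be such that R ⊊ X_A and R ⊊ Y_A. Then F(X) + F(Y) ≥ F(X ∪ Y) + F(X ∩ Y). -/
open Finset

variable {α : Type*}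

/-! When `R ⊊ S_A`, `F(S) = 1 - |S_B|/(2n)`, which is modular in `S` because cardinality is.
This settles `X`, `Y` and `X ∪ Y`. The intersection still satisfies `R ⊆ (X ∩ Y)_A`; if
equality holds, `F(X ∩ Y)` is the `g`-term, at most `1/(4n) ≤ 1/2 ≤ 1 - |(X ∩ Y)_B|/(2n)`,
so it does not exceed the modular value either. -/

theorem Finset.card_union_inter_add_card_inter_inter [DecidableEq α] (s t u : Finset α) :
    ((s ∪ t) ∩ u).card + ((s ∩ t) ∩ u).card = (s ∩ u).card + (t ∩ u).card := by
  rw [union_inter_distrib_right, inter_inter_distrib_right, card_union_add_card_inter]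

section
variable [DecidableEq α] {n : ℕ} {A R B : Finset α} {M : ℝ} {g : Finset α → ℝ} {S : Finset α}

theorem Fbb_of_ssubset (h : R ⊂ S ∩ A) :
    Fbb n A R B M g S = 1 - 1 / (2 * n) * (S ∩ B).card := by
  simp only [Fbb, fAR, phi, if_neg h.ne', if_neg h.asymm, if_pos h, if_pos (Or.inr h)]
  ring

theorem Fbb_of_eq (h : S ∩ A = R) :
    Fbb n A R B M g S = 1 / (4 * M * n) * g (S ∩ B) := by
  simp [Fbb, fAR, phi, h]

theorem Fbb_le_of_subset (hn : 1 ≤ n) (hM : 0 < M) (hgM : g (S ∩ B) ≤ M)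
    (hcard : (S ∩ B).card ≤ n) (h : R ⊆ S ∩ A) :
    Fbb n A R B M g S ≤ 1 - 1 / (2 * n) * (S ∩ B).card := by
  rcases h.eq_or_ssubset with h | h
  · have hn : (1 : ℝ) ≤ n := by exact_mod_cast hn
    have hcard : ((S ∩ B).card : ℝ) ≤ n := by exact_mod_cast hcard
    rw [Fbb_of_eq h.symm]
    calc 1 / (4 * M * n) * g (S ∩ B) ≤ 1 / (4 * M * n) * M := by gcongr
      _ = 1 / (4 * n) := by field_simp
      _ ≤ 1 / 2 := by rw [div_le_div_iff₀ (by positivity) (by norm_num)]; linarith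
      _ ≤ 1 - 1 / (2 * n) * (S ∩ B).card := by
        have hk : 1 / (2 * (n : ℝ)) * (S ∩ B).card ≤ 1 / (2 * n) * n := by gcongr
        rw [show 1 / (2 * (n : ℝ)) * n = 1 / 2 by field_simp] at hk
        linarith
  · exact (Fbb_of_ssubset h).le

end

theorem Fbb_case22_general [DecidableEq α] (V A R : Finset α) (hV : 1 ≤ V.card)
    (M : ℝ) (hM : 0 < M) (g : Finset α → ℝ)
    (hg : ∀ T ⊆ V \ A, 0 ≤ g T ∧ g T ≤ M)
    (X Y : Finset α)
    (hXA : R ⊂ X ∩ A) (hYA : R ⊂ Y ∩ A) :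
    Fbb V.card A R (V \ A) M g (X ∪ Y) + Fbb V.card A R (V \ A) M g (X ∩ Y)
      ≤ Fbb V.card A R (V \ A) M g X + Fbb V.card A R (V \ A) M g Y := by
  have hUA : R ⊂ (X ∪ Y) ∩ A := hXA.trans_subset (inter_subset_inter_right subset_union_left)
  have hIA : R ⊆ (X ∩ Y) ∩ A := by
    rw [inter_inter_distrib_right]; exact subset_inter hXA.subset hYA.subset
  have hI := Fbb_le_of_subset hV hM (hg _ inter_subset_right).2
    (card_le_card (inter_subset_right.trans sdiff_subset)) hIA
  have hmod := congrArg (Nat.cast (R := ℝ)) (card_union_inter_add_card_inter_inter X Y (V \ A))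
  push_cast at hmod
  rw [Fbb_of_ssubset hUA, Fbb_of_ssubset hXA, Fbb_of_ssubset hYA]
  linear_combination hI - 1 / (2 * (V.card : ℝ)) * hmod

/-- if 0 ≤ g ≤ M on subsets of B and R ⊊ X ∩ A, R ⊊ Y ∩ A, then F(X) + F(Y) ≥ F(X ∪ Y) + F(X ∩ Y). -/
theorem Fbb_case22 [DecidableEq α] (V A R : Finset α) (hV : 1 ≤ V.card)
    (hA : A.Nonempty) (hR : R.Nonempty) (hRA : R ⊆ A) (hAV : A ⊆ V)
    (M : ℝ) (hM : 0 < M) (g : Finset α → ℝ)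
    (hg : ∀ T ⊆ V \ A, 0 ≤ g T ∧ g T ≤ M)
    (X Y : Finset α) (hX : X ⊆ V) (hY : Y ⊆ V)
    (hXA : R ⊂ X ∩ A) (hYA : R ⊂ Y ∩ A) :
    Fbb V.card A R (V \ A) M g (X ∪ Y) + Fbb V.card A R (V \ A) M g (X ∩ Y)
      ≤ Fbb V.card A R (V \ A) M g X + Fbb V.card A R (V \ A) M g Y :=
  Fbb_case22_general V A R hV M hM g hg X Y hXA hYA
end

section
/- The function F is submodular: F(X) + F(Y) ≥ F(X ∪ Y) + F(X ∩ Y) for all X, Y ⊆ V. -/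
/-!
For a set `S` whose first disagreement with the `R_i` is at layer `k`, put `T = S ∩ A_k` and
`e = |S ∩ (B_k \ A_k)|`; then `F(S) = w_k (2 - (1 - ε_k e)[T ⊆ R_k] - (1 + ε_k e)[R_k ⊆ T])`,
with `w_k` the product in front and `ε_k = 1/(2|B_k|)`. Submodularity only has to be checked on
diamonds `S, S + x, S + y, S + x + y`. If `S` disagrees before the layers of `x` and `y`, the four
values are affine in `e` and the diamond is an equality. Otherwise the earlier of the two layers
is the key one: for fixed `e` the bracket is submodular in `T` (both indicators are
supermodular), its slope in `e` decreases as `T` grows, and a set with `T = R_k` has value in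
`[0, w_k ε_k]` because the weights drop by the factor `8|B_k|` from one layer to the next; this
error is absorbed by the slack of the bracket.
-/
open Finset

variable {α : Type*}

/-- The explicit layered function `F_{𝒜,ℛ}` of the family `𝓕_r(V)`.  The parts are
indexed `0, 1, …, ℓ-1`; for a set `S`, if `S ∩ A k = R k` for all `k < ℓ` the value is `0`,
and otherwise, letting `kS` be the least index `k < ℓ` with `S ∩ A k ≠ R k` and
`B kS = A kS ∪ ⋯ ∪ A (ℓ-1)`, the value is
`(∏_{j=0}^{kS-1} 1/(8(n - 2jr))) ⋅ (f_{A kS, R kS}(S ∩ A kS)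
  + (1/(2|B kS|)) ⋅ φ_{B kS, A kS, R kS}(S ∩ B kS))`. -/
noncomputable def Ffam [DecidableEq α] (n r ℓ : ℕ) (A R : ℕ → Finset α)
    (S : Finset α) : ℝ :=
  if h : ∃ k, k < ℓ ∧ S ∩ A k ≠ R k then
    (∏ j ∈ Finset.range (Nat.find h), (1 : ℝ) / (8 * ((n : ℝ) - 2 * j * r))) *
      (fAR (R (Nat.find h)) (S ∩ A (Nat.find h)) +
        (1 / (2 * (((Finset.Ico (Nat.find h) ℓ).biUnion A).card : ℝ))) *
          phi (A (Nat.find h)) (R (Nat.find h))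
            (((Finset.Ico (Nat.find h) ℓ).biUnion A) \ A (Nat.find h))
            (S ∩ (Finset.Ico (Nat.find h) ℓ).biUnion A))
  else 0

theorem forall_lt_or_exists_first {P : ℕ → Prop} (ℓ : ℕ) :
    (∀ i < ℓ, P i) ∨ ∃ k < ℓ, (∀ i < k, P i) ∧ ¬P k := by
  induction ℓ with
  | zero => simp
  | succ ℓ ih =>
    rcases ih with h | ⟨k, hk, hP⟩
    · by_cases hℓ : P ℓ
      · exact Or.inl fun i hi => (Nat.lt_succ_iff_lt_or_eq.mp hi).elim (h i) (· ▸ hℓ)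
      · exact Or.inr ⟨ℓ, Nat.lt_succ_self ℓ, h, hℓ⟩
    · exact Or.inr ⟨k, hk.trans (Nat.lt_succ_self ℓ), hP⟩

theorem card_insert_inter_of_mem [DecidableEq α] {S D : Finset α} {y : α} (hD : y ∈ D)
    (hS : y ∉ S) : ((insert y S ∩ D).card : ℝ) = (S ∩ D).card + 1 := by
  rw [insert_inter_of_mem hD, card_insert_of_notMem (fun h => hS (mem_inter.mp h).1)]
  push_cast
  ring

theorem indicator_add_indicator_le {p q u i : Prop} [Decidable p] [Decidable q] [Decidable u]
    [Decidable i] (hand : p ∧ q → u ∧ i) (hor : p ∨ q → u ∨ i) :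
    (if p then (1 : ℝ) else 0) + (if q then 1 else 0) ≤
      (if u then 1 else 0) + (if i then 1 else 0) := by
  split_ifs <;> norm_num <;> tauto

section Diamond

variable {β : Type*} [DecidableEq β] {F : Finset β → ℝ}

theorem insert_union_add_le_of_diamond
    (hF : ∀ S x y, x ∉ S → y ∉ S → x ≠ y →
      F (insert x (insert y S)) + F S ≤ F (insert x S) + F (insert y S))
    (D S : Finset β) {x : β} (hx : x ∉ S ∪ D) :
    F (insert x (S ∪ D)) + F S ≤ F (S ∪ D) + F (insert x S) := by
  induction D using Finset.induction_on with
  | empty => simp [add_comm]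
  | @insert z D hzD ih =>
    rw [union_insert]
    by_cases hz : z ∈ S ∪ D
    · rw [insert_eq_of_mem hz]
      exact ih (by simp_all)
    · have := hF (S ∪ D) x z (by simp_all) hz (by rintro rfl; simp_all)
      have := ih (by simp_all)
      linarith

theorem union_add_inter_le_of_diamond
    (hF : ∀ S x y, x ∉ S → y ∉ S → x ≠ y →
      F (insert x (insert y S)) + F S ≤ F (insert x S) + F (insert y S))
    (X Y : Finset β) : F (X ∪ Y) + F (X ∩ Y) ≤ F X + F Y := by
  suffices h : ∀ D I, I ⊆ X → Disjoint D X → F (X ∪ D) + F I ≤ F X + F (I ∪ D) by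
    have hY : X ∩ Y ∪ Y \ X = Y := by rw [inter_comm]; exact sup_inf_sdiff Y X
    simpa [union_sdiff_self_eq_union, hY] using
      h (Y \ X) (X ∩ Y) inter_subset_left sdiff_disjoint
  intro D
  induction D using Finset.induction_on with
  | empty => simp
  | @insert z D hzD ih =>
    intro I hIX hD
    rw [disjoint_insert_left] at hD
    have := ih I hIX hD.2
    have := insert_union_add_le_of_diamond hF (X \ I) (I ∪ D) (x := z) (by
      simp only [mem_union, mem_sdiff, not_or]
      exact ⟨⟨fun h => hD.1 (hIX h), hzD⟩, fun h => hD.1 h.1⟩)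
    rw [show I ∪ D ∪ X \ I = X ∪ D by ext; simp; grind] at this
    rw [union_insert, union_insert]
    linarith

end Diamond

section LayerValue

variable [DecidableEq α]

noncomputable def layerValue (R T : Finset α) (ε e : ℝ) : ℝ :=
  fAR R T + ε * (if T ⊂ R then e else if R ⊂ T then -e else 0)

theorem layerValue_eq (R T : Finset α) (ε e : ℝ) :
    layerValue R T ε e =
      2 - (1 - ε * e) * (if T ⊆ R then 1 else 0) - (1 + ε * e) * (if R ⊆ T then 1 else 0) := by
  simp only [layerValue, fAR, ssubset_def, Subset.antisymm_iff]
  split_ifs <;> simp_all <;> ring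

theorem layerValue_mem_Icc (R T : Finset α) {ε e : ℝ} (h₀ : 0 ≤ ε * e) (h₁ : ε * e ≤ 1) :
    layerValue R T ε e ∈ Set.Icc 0 2 := by
  rw [layerValue_eq]
  constructor <;> split_ifs <;> linarith

theorem layerValue_union_add_inter_le (R X Y : Finset α) {ε e : ℝ} (h₀ : 0 ≤ ε * e)
    (h₁ : ε * e ≤ 1) :
    layerValue R (X ∪ Y) ε e + layerValue R (X ∩ Y) ε e ≤
      layerValue R X ε e + layerValue R Y ε e := by
  have hsub := indicator_add_indicator_le (p := X ⊆ R) (q := Y ⊆ R) (u := X ∪ Y ⊆ R)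
    (i := X ∩ Y ⊆ R) (fun h => ⟨union_subset h.1 h.2, inter_subset_left.trans h.1⟩)
    (by rintro (h | h)
        exacts [Or.inr (inter_subset_left.trans h), Or.inr (inter_subset_right.trans h)])
  have hsup := indicator_add_indicator_le (p := R ⊆ X) (q := R ⊆ Y) (u := R ⊆ X ∪ Y)
    (i := R ⊆ X ∩ Y) (fun h => ⟨h.1.trans subset_union_left, subset_inter h.1 h.2⟩)
    (by rintro (h | h)
        exacts [Or.inl (h.trans subset_union_left), Or.inl (h.trans subset_union_right)])
  simp only [layerValue_eq]
  nlinarith [mul_le_mul_of_nonneg_left hsub (by linarith : 0 ≤ 1 - ε * e),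
    mul_le_mul_of_nonneg_left hsup (by linarith : 0 ≤ 1 + ε * e)]

theorem layerValue_add_le_of_subset_of_le (R : Finset α) {T T' : Finset α} (hT : T ⊆ T')
    {ε e e' : ℝ} (hε : 0 ≤ ε) (he : e ≤ e') :
    layerValue R T' ε e' + layerValue R T ε e ≤ layerValue R T' ε e + layerValue R T ε e' := by
  simp only [layerValue_eq]
  have hsub : T' ⊆ R → T ⊆ R := hT.trans
  have hsup : R ⊆ T → R ⊆ T' := (·.trans hT)
  have hεe : 0 ≤ ε * (e' - e) := mul_nonneg hε (by linarith)
  split_ifs <;> simp_all <;> nlinarith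

theorem layerValue_add_add (R T : Finset α) (ε e d d' : ℝ) :
    layerValue R T ε (e + d + d') + layerValue R T ε e =
      layerValue R T ε (e + d) + layerValue R T ε (e + d') := by
  simp only [layerValue_eq]
  ring

end LayerValue

section IsLayerValue

variable [DecidableEq α]

/-- The value `v` of a set that agrees with the `R_i` before the current layer and meets it in
`T`: exact when `T ≠ R`; when `T = R` only the bound `0 ≤ v ≤ c ε` coming from the deeper
layers is kept. -/
def IsLayerValue (c ε : ℝ) (R T : Finset α) (e v : ℝ) : Prop :=
  (T ≠ R → v = c * layerValue R T ε e) ∧ (T = R → v ∈ Set.Icc 0 (c * ε))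

variable {c ε e v : ℝ} {R T : Finset α}

theorem IsLayerValue.eq_of_ssubset (h : IsLayerValue c ε R T e v) (hT : T ⊂ R) :
    v = c * (1 + ε * e) := by
  rw [h.1 hT.ne, layerValue_eq, if_pos hT.subset, if_neg (not_subset_of_ssubset hT)]
  ring

theorem IsLayerValue.eq_of_ssuperset (h : IsLayerValue c ε R T e v) (hT : R ⊂ T) :
    v = c * (1 - ε * e) := by
  rw [h.1 hT.ne', layerValue_eq, if_neg (not_subset_of_ssubset hT), if_pos hT.subset]
  ring

theorem IsLayerValue.eq_of_not_subset (h : IsLayerValue c ε R T e v) (hTR : ¬T ⊆ R)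
    (hRT : ¬R ⊆ T) : v = 2 * c := by
  rw [h.1 (by rintro rfl; exact hTR subset_rfl), layerValue_eq, if_neg hTR, if_neg hRT]
  ring

theorem IsLayerValue.insert_insert_add_le {v₁ v₂ v₃ : ℝ} {x y : α} (hc : 0 ≤ c)
    (hε : 0 ≤ ε) (hεe : 0 ≤ ε * e) (hεe₁ : ε * e + ε ≤ 1) (hx : x ∉ T) (hy : y ∉ T)
    (hxy : x ≠ y)
    (h₀ : IsLayerValue c ε R T e v) (h₁ : IsLayerValue c ε R (insert x T) e v₁)
    (h₂ : IsLayerValue c ε R (insert y T) e v₂)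
    (h₃ : IsLayerValue c ε R (insert x (insert y T)) e v₃) :
    v₃ + v ≤ v₁ + v₂ := by
  wlog hTy : insert y T ≠ R generalizing x y v₁ v₂ v₃ with H
  · have := H hy hx hxy.symm h₂ h₁ (insert_comm x y T ▸ h₃) (fun hTx => hxy ?_)
    · linarith
    · have hx' : x ∈ insert y T := (not_not.mp hTy) ▸ hTx ▸ mem_insert_self x T
      simpa [hx] using hx'
  have hcε : c * ε ≤ c * (1 - ε * e) := mul_le_mul_of_nonneg_left (by linarith) hc
  by_cases hT : T = R
  · subst hT
    have hR₃ : T ⊂ insert x (insert y T) := (ssubset_insert hy).trans_subset (subset_insert _ _)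
    rw [h₁.eq_of_ssuperset (ssubset_insert hx), h₂.eq_of_ssuperset (ssubset_insert hy),
      h₃.eq_of_ssuperset hR₃]
    linarith [(h₀.2 rfl).2]
  by_cases hTx : insert x T = R
  · subst hTx
    have hyx : y ∉ insert x T := by simp [hy, hxy.symm]
    rw [insert_comm] at h₃
    rw [h₀.eq_of_ssubset (ssubset_insert hx), h₃.eq_of_ssuperset (ssubset_insert hyx),
      h₂.eq_of_not_subset (fun h => hyx (h (mem_insert_self y T)))
        (fun h => by simpa [hx, hxy] using h (mem_insert_self x T))]
    linarith [(h₁.2 rfl).1]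
  by_cases hTxy : insert x (insert y T) = R
  · subst hTxy
    have hTy' : insert y T ⊂ insert x (insert y T) := ssubset_insert (by simp [hx, hxy])
    rw [h₀.eq_of_ssubset ((ssubset_insert hy).trans hTy'), h₂.eq_of_ssubset hTy',
      h₁.eq_of_ssubset (insert_comm x y T ▸ ssubset_insert (by simp [hy, hxy.symm]))]
    nlinarith [(h₃.2 rfl).2]
  have hunion : insert x T ∪ insert y T = insert x (insert y T) := by ext; simp; tauto
  have hinter : insert x T ∩ insert y T = T := by ext; simp; grind
  have hsub := layerValue_union_add_inter_le R (insert x T) (insert y T) hεe (by linarith)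
  rw [hunion, hinter] at hsub
  rw [h₀.1 hT, h₁.1 hTx, h₂.1 hTy, h₃.1 hTxy]
  nlinarith [mul_le_mul_of_nonneg_left hsub hc]

theorem IsLayerValue.insert_add_le {v₁ v₂ v₃ : ℝ} {x : α} (hc : 0 ≤ c) (hε : 0 ≤ ε)
    (hx : x ∉ T) (h₀ : IsLayerValue c ε R T e v) (h₁ : IsLayerValue c ε R (insert x T) e v₁)
    (h₂ : IsLayerValue c ε R T (e + 1) v₂) (h₃ : IsLayerValue c ε R (insert x T) (e + 1) v₃) :
    v₃ + v ≤ v₁ + v₂ := by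
  by_cases hT : T = R
  · subst hT
    rw [h₁.eq_of_ssuperset (ssubset_insert hx), h₃.eq_of_ssuperset (ssubset_insert hx)]
    nlinarith [(h₀.2 rfl).2, (h₂.2 rfl).1]
  by_cases hTx : insert x T = R
  · subst hTx
    rw [h₀.eq_of_ssubset (ssubset_insert hx), h₂.eq_of_ssubset (ssubset_insert hx)]
    nlinarith [(h₁.2 rfl).1, (h₃.2 rfl).2]
  have := layerValue_add_le_of_subset_of_le R (subset_insert x T) (e := e) (e' := e + 1) hε
    (by linarith)
  rw [h₀.1 hT, h₁.1 hTx, h₂.1 hT, h₃.1 hTx]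
  nlinarith [mul_le_mul_of_nonneg_left this hc]

end IsLayerValue

section Layers

variable [DecidableEq α] {n r ℓ k : ℕ} {A R : ℕ → Finset α} {S : Finset α}

/-- `layersFrom ℓ A k` is the paper's `B_k` (layers are indexed from `0`), `layerWeight n r k`
the product in front of `F`, and `layerSlope ℓ A k` the coefficient `1/(2|B_k|)` of `φ`. -/
def layersFrom (ℓ : ℕ) (A : ℕ → Finset α) (k : ℕ) : Finset α := (Ico k ℓ).biUnion A

noncomputable def layerWeight (n r k : ℕ) : ℝ :=
  ∏ j ∈ range k, 1 / (8 * ((n : ℝ) - 2 * j * r))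

noncomputable def layerSlope (ℓ : ℕ) (A : ℕ → Finset α) (k : ℕ) : ℝ :=
  1 / (2 * ((layersFrom ℓ A k).card : ℝ))

theorem Ffam_eq_zero (hS : ∀ i < ℓ, S ∩ A i = R i) : Ffam n r ℓ A R S = 0 :=
  dif_neg fun ⟨k, hk, hne⟩ => hne (hS k hk)

theorem Ffam_eq (hk : k < ℓ) (hS : ∀ i < k, S ∩ A i = R i) (hSk : S ∩ A k ≠ R k) :
    Ffam n r ℓ A R S = layerWeight n r k *
      layerValue (R k) (S ∩ A k) (layerSlope ℓ A k) (S ∩ (layersFrom ℓ A k \ A k)).card := by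
  have h : ∃ k, k < ℓ ∧ S ∩ A k ≠ R k := ⟨k, hk, hSk⟩
  have hfind : Nat.find h = k :=
    (Nat.find_eq_iff h).mpr ⟨⟨hk, hSk⟩, fun i hi hne => hne.2 (hS i hi)⟩
  have hA : A k ⊆ (Ico k ℓ).biUnion A := subset_biUnion_of_mem A (by simp [hk])
  rw [Ffam, dif_pos h, hfind, phi, inter_assoc S _ (A k), inter_eq_right.mpr hA, inter_assoc,
    inter_eq_right.mpr sdiff_subset]
  rfl

theorem Ffam_insert_of_forall_notMem {x : α} (hx : ∀ i < ℓ, x ∉ A i) :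
    Ffam n r ℓ A R (insert x S) = Ffam n r ℓ A R S := by
  have hA : ∀ i < ℓ, insert x S ∩ A i = S ∩ A i := fun i hi => insert_inter_of_notMem (hx i hi)
  rcases forall_lt_or_exists_first (P := fun i => S ∩ A i = R i) ℓ with hS | ⟨k, hk, hS, hSk⟩
  · rw [Ffam_eq_zero hS, Ffam_eq_zero fun i hi => (hA i hi).trans (hS i hi)]
  · have hD : x ∉ layersFrom ℓ A k \ A k := fun h => by
      obtain ⟨i, hi, hxi⟩ := mem_biUnion.mp (mem_sdiff.mp h).1
      exact hx i (mem_Ico.mp hi).2 hxi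
    rw [Ffam_eq hk hS hSk, Ffam_eq hk (fun i hi => (hA i (hi.trans hk)).trans (hS i hi))
      ((hA k hk).trans_ne hSk), hA k hk, insert_inter_of_notMem hD]

end Layers

structure IsLayering (n r ℓ : ℕ) (A : ℕ → Finset α) : Prop where
  one_le_r : 1 ≤ r
  n_eq : n = 2 * r * ℓ
  disjoint : ∀ i < ℓ, ∀ j < ℓ, i ≠ j → Disjoint (A i) (A j)
  card_layer : ∀ i < ℓ, (A i).card = 2 * r

namespace IsLayering

variable {n r ℓ k j m : ℕ} {A R : ℕ → Finset α} {S : Finset α} {x : α}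
  (hA : IsLayering n r ℓ A)
include hA

theorem two_le_sub (hk : k < ℓ) : (2 : ℝ) ≤ n - 2 * k * r := by
  have hk : (k : ℝ) + 1 ≤ ℓ := by exact_mod_cast hk
  have hr : (1 : ℝ) ≤ r := by exact_mod_cast hA.one_le_r
  rw [hA.n_eq]
  push_cast
  nlinarith

theorem layerWeight_pos (hk : k ≤ ℓ) : 0 < layerWeight n r k :=
  prod_pos fun j hj => by
    have := hA.two_le_sub ((mem_range.mp hj).trans_le hk)
    positivity

variable [DecidableEq α]

theorem card_layersFrom (hk : k ≤ ℓ) : ((layersFrom ℓ A k).card : ℝ) = n - 2 * k * r := by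
  rw [layersFrom, card_biUnion fun i hi j hj hij =>
    hA.disjoint i (mem_Ico.mp hi).2 j (mem_Ico.mp hj).2 hij,
    sum_congr rfl fun i hi => hA.card_layer i (mem_Ico.mp hi).2, sum_const, Nat.card_Ico,
    smul_eq_mul, hA.n_eq]
  push_cast [Nat.cast_sub hk]
  ring

theorem layerWeight_succ (hk : k < ℓ) :
    layerWeight n r (k + 1) = layerWeight n r k / (8 * ((layersFrom ℓ A k).card : ℝ)) := by
  rw [layerWeight, prod_range_succ, hA.card_layersFrom hk.le, ← layerWeight, mul_one_div]

theorem layerWeight_le_of_le (hmk : m ≤ k) (hk : k ≤ ℓ) :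
    layerWeight n r k ≤ layerWeight n r m := by
  induction k, hmk using Nat.le_induction with
  | base => rfl
  | succ k _ ih =>
    have hb : (2 : ℝ) ≤ (layersFrom ℓ A k).card :=
      hA.card_layersFrom (k := k) (by omega) ▸ hA.two_le_sub hk
    rw [hA.layerWeight_succ hk, div_le_iff₀ (by positivity)]
    nlinarith [hA.layerWeight_pos (n := n) (k := k) (by omega), ih (by omega)]

theorem two_mul_layerWeight_succ_le (hk : k < ℓ) :
    2 * layerWeight n r (k + 1) ≤ layerWeight n r k * layerSlope ℓ A k := by
  have hb : (2 : ℝ) ≤ (layersFrom ℓ A k).card := hA.card_layersFrom hk.le ▸ hA.two_le_sub hk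
  have hw := hA.layerWeight_pos (n := n) hk.le
  rw [hA.layerWeight_succ hk, layerSlope]
  field_simp
  nlinarith

theorem layerSlope_mul_le (hk : k < ℓ) (S : Finset α) :
    layerSlope ℓ A k * ((S ∩ (layersFrom ℓ A k \ A k)).card + 1) ≤ 1 / 2 := by
  have hsub : A k ⊆ layersFrom ℓ A k := subset_biUnion_of_mem A (by simp [hk])
  have hcard : (S ∩ (layersFrom ℓ A k \ A k)).card + 1 ≤ (layersFrom ℓ A k).card := by
    rw [← card_sdiff_add_card_eq_card hsub, hA.card_layer k hk]
    have := card_le_card (inter_subset_right (s₁ := S) (s₂ := layersFrom ℓ A k \ A k))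
    have := hA.one_le_r
    omega
  have hcard' : ((S ∩ (layersFrom ℓ A k \ A k)).card : ℝ) + 1 ≤ (layersFrom ℓ A k).card := by
    exact_mod_cast hcard
  rw [layerSlope, div_mul_eq_mul_div, one_mul, div_le_iff₀ (by linarith)]
  linarith

theorem layerSlope_bounds (hk : k < ℓ) (S : Finset α) :
    0 ≤ layerSlope ℓ A k ∧ 0 ≤ layerSlope ℓ A k * (S ∩ (layersFrom ℓ A k \ A k)).card ∧
      layerSlope ℓ A k * (S ∩ (layersFrom ℓ A k \ A k)).card + layerSlope ℓ A k ≤ 1 := by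
  have := hA.layerSlope_mul_le hk S
  have hε : 0 ≤ layerSlope ℓ A k := by unfold layerSlope; positivity
  exact ⟨hε, by positivity, by linarith⟩

theorem Ffam_mem_Icc (hm : m ≤ ℓ) (hS : ∀ i < m, S ∩ A i = R i) :
    Ffam n r ℓ A R S ∈ Set.Icc 0 (2 * layerWeight n r m) := by
  rcases forall_lt_or_exists_first (P := fun i => S ∩ A i = R i) ℓ with hall | ⟨k, hk, hS', hSk⟩
  · rw [Ffam_eq_zero hall]
    exact ⟨le_rfl, by linarith [hA.layerWeight_pos (n := n) hm]⟩
  · have hmk : m ≤ k := by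
      by_contra h
      exact hSk (hS k (by omega))
    obtain ⟨hε, hεe, hεe₁⟩ := hA.layerSlope_bounds hk S
    obtain ⟨h₀, h₂⟩ := layerValue_mem_Icc (R k) (S ∩ A k) hεe (by linarith)
    have hw := hA.layerWeight_pos (n := n) hk.le
    rw [Ffam_eq hk hS' hSk]
    exact ⟨by positivity, by nlinarith [hA.layerWeight_le_of_le (n := n) hmk hk.le]⟩

theorem isLayerValue_Ffam (hk : k < ℓ) (hS : ∀ i < k, S ∩ A i = R i) :
    IsLayerValue (layerWeight n r k) (layerSlope ℓ A k) (R k) (S ∩ A k)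
      (S ∩ (layersFrom ℓ A k \ A k)).card (Ffam n r ℓ A R S) := by
  refine ⟨Ffam_eq hk hS, fun hSk => ?_⟩
  have hS' : ∀ i < k + 1, S ∩ A i = R i := fun i hi =>
    (Nat.lt_succ_iff_lt_or_eq.mp hi).elim (hS i) (· ▸ hSk)
  obtain ⟨h₀, h₂⟩ := hA.Ffam_mem_Icc hk hS'
  exact ⟨h₀, h₂.trans (hA.two_mul_layerWeight_succ_le hk)⟩

theorem insert_inter_of_mem_ne (hxA : x ∈ A j) (hj : j < ℓ) {i : ℕ} (hi : i < ℓ) (hij : i ≠ j) :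
    insert x S ∩ A i = S ∩ A i :=
  insert_inter_of_notMem (disjoint_left.mp (hA.disjoint j hj i hi hij.symm) hxA)

theorem forall_insert_inter_eq (hS : ∀ i < k, S ∩ A i = R i) (hxA : x ∈ A j) (hj : j < ℓ)
    (hkj : k ≤ j) : ∀ i < k, insert x S ∩ A i = R i := fun i hi =>
  (hA.insert_inter_of_mem_ne hxA hj (by omega) (by omega)).trans (hS i hi)

theorem mem_layersFrom_sdiff (hxA : x ∈ A j) (hj : j < ℓ) (hkj : k < j) :
    x ∈ layersFrom ℓ A k \ A k :=
  mem_sdiff.mpr ⟨mem_biUnion.mpr ⟨j, mem_Ico.mpr ⟨hkj.le, hj⟩, hxA⟩,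
    disjoint_left.mp (hA.disjoint j hj k (by omega) hkj.ne') hxA⟩

theorem Ffam_insert_of_lt (hxA : x ∈ A j) (hj : j < ℓ) (hmj : m < j) (hx : x ∉ S)
    (hS : ∀ i < m, S ∩ A i = R i) (hSm : S ∩ A m ≠ R m) :
    Ffam n r ℓ A R (insert x S) = layerWeight n r m * layerValue (R m) (S ∩ A m)
      (layerSlope ℓ A m) ((S ∩ (layersFrom ℓ A m \ A m)).card + 1) := by
  have hxm := hA.insert_inter_of_mem_ne (S := S) hxA hj (hmj.trans hj) hmj.ne
  rw [Ffam_eq (hmj.trans hj) (hA.forall_insert_inter_eq hS hxA hj hmj.le) (hxm ▸ hSm), hxm,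
    card_insert_inter_of_mem (hA.mem_layersFrom_sdiff hxA hj hmj) hx]

theorem Ffam_insert_insert_add_eq {y : α} {jx jy : ℕ} (hx : x ∉ S) (hy : y ∉ S)
    (hxy : x ≠ y) (hxA : x ∈ A jx) (hyA : y ∈ A jy) (hjx : jx < ℓ) (hjy : jy < ℓ)
    (hmx : m < jx) (hmy : m < jy) (hS : ∀ i < m, S ∩ A i = R i) (hSm : S ∩ A m ≠ R m) :
    Ffam n r ℓ A R (insert x (insert y S)) + Ffam n r ℓ A R S =
      Ffam n r ℓ A R (insert x S) + Ffam n r ℓ A R (insert y S) := by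
  have hym := hA.insert_inter_of_mem_ne (S := S) hyA hjy (hmy.trans hjy) hmy.ne
  rw [hA.Ffam_insert_of_lt hxA hjx hmx (by simp [hx, hxy])
      (hA.forall_insert_inter_eq hS hyA hjy hmy.le) (hym ▸ hSm),
    hA.Ffam_insert_of_lt hxA hjx hmx hx hS hSm, hA.Ffam_insert_of_lt hyA hjy hmy hy hS hSm,
    Ffam_eq (hmx.trans hjx) hS hSm, hym,
    card_insert_inter_of_mem (hA.mem_layersFrom_sdiff hyA hjy hmy) hy,
    ← mul_add, ← mul_add, layerValue_add_add]

theorem Ffam_insert_insert_add_le_of_forall {y : α} {jx jy : ℕ} (hx : x ∉ S) (hy : y ∉ S)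
    (hxy : x ≠ y) (hxA : x ∈ A jx) (hyA : y ∈ A jy) (hj : jx ≤ jy) (hjy : jy < ℓ)
    (hS : ∀ i < jx, S ∩ A i = R i) :
    Ffam n r ℓ A R (insert x (insert y S)) + Ffam n r ℓ A R S ≤
      Ffam n r ℓ A R (insert x S) + Ffam n r ℓ A R (insert y S) := by
  have hjx : jx < ℓ := hj.trans_lt hjy
  have hy' := hA.forall_insert_inter_eq hS hyA hjy hj
  have h₀ := hA.isLayerValue_Ffam hjx hS
  have h₁ := hA.isLayerValue_Ffam hjx (hA.forall_insert_inter_eq hS hxA hjx le_rfl)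
  have h₂ := hA.isLayerValue_Ffam hjx hy'
  have h₃ := hA.isLayerValue_Ffam hjx (hA.forall_insert_inter_eq hy' hxA hjx le_rfl)
  have hxD : x ∉ layersFrom ℓ A jx \ A jx := fun h => (mem_sdiff.mp h).2 hxA
  obtain ⟨hε, hεe, hεe₁⟩ := hA.layerSlope_bounds hjx S
  have hw := (hA.layerWeight_pos (n := n) hjx.le).le
  rw [insert_inter_of_mem hxA, insert_inter_of_notMem hxD] at h₁
  rw [insert_inter_of_mem hxA, insert_inter_of_notMem hxD] at h₃
  rcases hj.eq_or_lt with rfl | hlt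
  · have hyD : y ∉ layersFrom ℓ A jx \ A jx := fun h => (mem_sdiff.mp h).2 hyA
    rw [insert_inter_of_mem hyA, insert_inter_of_notMem hyD] at h₂
    rw [insert_inter_of_mem hyA, insert_inter_of_notMem hyD] at h₃
    exact h₀.insert_insert_add_le hw hε hεe hεe₁ (fun h => hx (mem_inter.mp h).1)
      (fun h => hy (mem_inter.mp h).1) hxy h₁ h₂ h₃
  · have hyD := hA.mem_layersFrom_sdiff hyA hjy hlt
    have hyA' := hA.insert_inter_of_mem_ne (S := S) hyA hjy hjx hlt.ne
    rw [hyA', card_insert_inter_of_mem hyD hy] at h₂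
    rw [hyA', card_insert_inter_of_mem hyD hy] at h₃
    exact h₀.insert_add_le hw hε (fun h => hx (mem_inter.mp h).1) h₁ h₂ h₃

theorem Ffam_insert_insert_add_le_of_le {y : α} {jx jy : ℕ} (hx : x ∉ S) (hy : y ∉ S)
    (hxy : x ≠ y) (hxA : x ∈ A jx) (hyA : y ∈ A jy) (hj : jx ≤ jy) (hjy : jy < ℓ) :
    Ffam n r ℓ A R (insert x (insert y S)) + Ffam n r ℓ A R S ≤
      Ffam n r ℓ A R (insert x S) + Ffam n r ℓ A R (insert y S) := by
  rcases forall_lt_or_exists_first (P := fun i => S ∩ A i = R i) jx with hS | ⟨m, hm, hS, hSm⟩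
  · exact hA.Ffam_insert_insert_add_le_of_forall hx hy hxy hxA hyA hj hjy hS
  · exact (hA.Ffam_insert_insert_add_eq hx hy hxy hxA hyA (hj.trans_lt hjy) hjy hm
      (hm.trans_le hj) hS hSm).le

theorem Ffam_insert_insert_add_le {y : α} (hx : x ∉ S) (hy : y ∉ S) (hxy : x ≠ y) :
    Ffam n r ℓ A R (insert x (insert y S)) + Ffam n r ℓ A R S ≤
      Ffam n r ℓ A R (insert x S) + Ffam n r ℓ A R (insert y S) := by
  by_cases hxA : ∃ j < ℓ, x ∈ A j
  · by_cases hyA : ∃ j < ℓ, y ∈ A j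
    · obtain ⟨jx, hjx, hxA⟩ := hxA
      obtain ⟨jy, hjy, hyA⟩ := hyA
      rcases le_total jx jy with hj | hj
      · exact hA.Ffam_insert_insert_add_le_of_le hx hy hxy hxA hyA hj hjy
      · rw [insert_comm, add_comm (Ffam n r ℓ A R (insert x S))]
        exact hA.Ffam_insert_insert_add_le_of_le hy hx hxy.symm hyA hxA hj hjx
    · push Not at hyA
      rw [Ffam_insert_of_forall_notMem hyA, insert_comm, Ffam_insert_of_forall_notMem hyA]
  · push Not at hxA
    rw [Ffam_insert_of_forall_notMem hxA, Ffam_insert_of_forall_notMem hxA, add_comm]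

end IsLayering

theorem Ffam_submodular_general [DecidableEq α] (V : Finset α) (n r ℓ : ℕ)
    (hr : 1 ≤ r) (hnrl : n = 2 * r * ℓ)
    (A R : ℕ → Finset α)
    (hdisj : ∀ i < ℓ, ∀ j < ℓ, i ≠ j → Disjoint (A i) (A j))
    (hAcard : ∀ i < ℓ, (A i).card = 2 * r) :
    ∀ X ⊆ V, ∀ Y ⊆ V,
      Ffam n r ℓ A R (X ∪ Y) + Ffam n r ℓ A R (X ∩ Y)
        ≤ Ffam n r ℓ A R X + Ffam n r ℓ A R Y := by
  intro X _ Y _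
  have hA : IsLayering n r ℓ A := ⟨hr, hnrl, hdisj, hAcard⟩
  exact union_add_inter_le_of_diamond (fun _ _ _ => hA.Ffam_insert_insert_add_le) X Y

/-- `F` is submodular: `F(X) + F(Y) ≥ F(X ∪ Y) + F(X ∩ Y)` for all
`X, Y ⊆ V`. -/
theorem Ffam_submodular [DecidableEq α] (V : Finset α) (n r ℓ : ℕ) (hn : V.card = n)
    (hr : 1 ≤ r) (hl : 1 ≤ ℓ) (hnrl : n = 2 * r * ℓ)
    (A R : ℕ → Finset α)
    (hdisj : ∀ i < ℓ, ∀ j < ℓ, i ≠ j → Disjoint (A i) (A j))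
    (hunion : (Finset.range ℓ).biUnion A = V)
    (hAcard : ∀ i < ℓ, (A i).card = 2 * r)
    (hRsub : ∀ i < ℓ, R i ⊆ A i)
    (hRcard : ∀ i < ℓ, (R i).card = r) :
    ∀ X ⊆ V, ∀ Y ⊆ V,
      Ffam n r ℓ A R (X ∪ Y) + Ffam n r ℓ A R (X ∩ Y)
        ≤ Ffam n r ℓ A R X + Ffam n r ℓ A R Y :=
  Ffam_submodular_general V n r ℓ hr hnrl A R hdisj hAcard
end

section
/- Assume 0 ≤ g(T) ≤ M for all T ⊆ B. If X, Y ⊆ V satisfy R ⊊ X_A, R ⊊ Y_A, and R ⊊ X_A ∩ Y_A, then φ(X) + φ(Y) = φ(X ∩ Y) + φ(X ∪ Y) and consequently F(X) + F(Y) = F(X ∪ Y) + F(X ∩ Y). -/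
open Finset

variable {α : Type*}

/-! When `R ⊊ S ∩ A`, `f_{A,R}(S ∩ A) = 1`, the indicator `1[S ∩ A = R]` vanishes and
`φ(S) = -|S ∩ B|`. All of `X`, `Y`, `X ∩ Y`, `X ∪ Y` lie in this region once `X ∩ Y` does, so
modularity of `φ` and of `F` reduces to `|X ∩ B| + |Y ∩ B| = |(X ∩ Y) ∩ B| + |(X ∪ Y) ∩ B|`. -/

section AboveR

variable [DecidableEq α] {A R B S T X Y : Finset α}

theorem fAR_of_ssubset (h : R ⊂ T) : fAR R T = 1 := by
  simp [fAR, h, h.ne']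

theorem phi_of_ssubset_inter (h : R ⊂ S ∩ A) : phi A R B S = -((S ∩ B).card : ℝ) := by
  simp [phi, h, h.asymm]

theorem Fbb_of_ssubset_inter (n : ℕ) (M : ℝ) (g : Finset α → ℝ) (h : R ⊂ S ∩ A) :
    Fbb n A R B M g S = 1 + (1 / (2 * (n : ℝ))) * phi A R B S := by
  simp [Fbb, fAR_of_ssubset h, h.ne']

theorem ssubset_inter_of_subset (h : R ⊂ S ∩ A) (hST : S ⊆ T) : R ⊂ T ∩ A :=
  h.trans_subset (inter_subset_inter hST subset_rfl)

theorem phi_add_phi_eq_of_ssubset (h : R ⊂ (X ∩ Y) ∩ A) :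
    phi A R B X + phi A R B Y = phi A R B (X ∩ Y) + phi A R B (X ∪ Y) := by
  have hX := ssubset_inter_of_subset h inter_subset_left
  have hY := ssubset_inter_of_subset h inter_subset_right
  have hU := ssubset_inter_of_subset h inter_subset_union
  rw [phi_of_ssubset_inter hX, phi_of_ssubset_inter hY, phi_of_ssubset_inter h,
    phi_of_ssubset_inter hU, inter_inter_distrib_right, union_inter_distrib_right]
  have hcard : (((X ∩ B) ∩ (Y ∩ B)).card : ℝ) + ((X ∩ B) ∪ (Y ∩ B)).card
      = (X ∩ B).card + (Y ∩ B).card := by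
    exact_mod_cast card_inter_add_card_union (X ∩ B) (Y ∩ B)
  linarith

theorem Fbb_add_Fbb_eq_of_ssubset (n : ℕ) (M : ℝ) (g : Finset α → ℝ)
    (h : R ⊂ (X ∩ Y) ∩ A) :
    Fbb n A R B M g X + Fbb n A R B M g Y
      = Fbb n A R B M g (X ∪ Y) + Fbb n A R B M g (X ∩ Y) := by
  rw [Fbb_of_ssubset_inter n M g (ssubset_inter_of_subset h inter_subset_left),
    Fbb_of_ssubset_inter n M g (ssubset_inter_of_subset h inter_subset_right),
    Fbb_of_ssubset_inter n M g (ssubset_inter_of_subset h inter_subset_union),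
    Fbb_of_ssubset_inter n M g h]
  linear_combination (1 / (2 * (n : ℝ))) * phi_add_phi_eq_of_ssubset (B := B) h

end AboveR

theorem phi_modular_case_general [DecidableEq α] (V A R : Finset α)
    (M : ℝ) (g : Finset α → ℝ)
    (X Y : Finset α)
    (hXYA : R ⊂ (X ∩ A) ∩ (Y ∩ A)) :
    phi A R (V \ A) X + phi A R (V \ A) Y
        = phi A R (V \ A) (X ∩ Y) + phi A R (V \ A) (X ∪ Y) ∧
      Fbb V.card A R (V \ A) M g X + Fbb V.card A R (V \ A) M g Y
        = Fbb V.card A R (V \ A) M g (X ∪ Y) + Fbb V.card A R (V \ A) M g (X ∩ Y) := by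
  rw [← inter_inter_distrib_right] at hXYA
  exact ⟨phi_add_phi_eq_of_ssubset hXYA, Fbb_add_Fbb_eq_of_ssubset V.card M g hXYA⟩

/-- if `0 ≤ g ≤ M` on subsets of `B`, and `R ⊊ X ∩ A`, `R ⊊ Y ∩ A`,
`R ⊊ X ∩ A ∩ (Y ∩ A)`, then `φ(X) + φ(Y) = φ(X ∩ Y) + φ(X ∪ Y)` and consequently
`F(X) + F(Y) = F(X ∪ Y) + F(X ∩ Y)`. -/
theorem phi_modular_case [DecidableEq α] (V A R : Finset α) (hV : 1 ≤ V.card)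
    (hA : A.Nonempty) (hR : R.Nonempty) (hRA : R ⊆ A) (hAV : A ⊆ V)
    (M : ℝ) (hM : 0 < M) (g : Finset α → ℝ)
    (hg : ∀ T ⊆ V \ A, 0 ≤ g T ∧ g T ≤ M)
    (X Y : Finset α) (hX : X ⊆ V) (hY : Y ⊆ V)
    (hXA : R ⊂ X ∩ A) (hYA : R ⊂ Y ∩ A) (hXYA : R ⊂ (X ∩ A) ∩ (Y ∩ A)) :
    phi A R (V \ A) X + phi A R (V \ A) Y
        = phi A R (V \ A) (X ∩ Y) + phi A R (V \ A) (X ∪ Y) ∧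
      Fbb V.card A R (V \ A) M g X + Fbb V.card A R (V \ A) M g Y
        = Fbb V.card A R (V \ A) M g (X ∪ Y) + Fbb V.card A R (V \ A) M g (X ∩ Y) :=
  phi_modular_case_general V A R M g X Y hXYA
end
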